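/- Suppose λ ≠ 0 and the eigenspaces E_λ(Δ_{k−1}) = {α ∈ V_{k−1} | Δ_{k−1} α = λ • α} and E_λ(Δ_{k+1}) are finite-dimensional. Then E_λ(Δ_k) is finite-dimensional and dim E_λ(Δ_k) ≤ dim E_λ(Δ_{k−1}) + dim E_λ(Δ_{k+1}). (Abstract form of Theorem 2(a): b^k_λ ≤ b^{k−1}_λ + b^{k+1}_λ for λ > 0.) -/

import Mathlib

/-!
On the `λ`-eigenspace of `Δ_k = δ d + d δ` the pair `x ↦ (δ x, d x)` is injective when `λ ≠ 0`,
since `λ x = δ (d x) + d (δ x)`. Because `d d = 0` forces `δ δ = 0`, both `δ` and `d` intertwine the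
neighbouring Laplacians, so this pair maps `E_λ(Δ_k)` into `E_λ(Δ_{k-1}) × E_λ(Δ_{k+1})`.
-/

open Module Module.End

theorem formalAdjoint_comp_eq_zero {𝕜 A B C : Type*} [RCLike 𝕜]
    [NormedAddCommGroup A] [InnerProductSpace 𝕜 A] [NormedAddCommGroup B] [InnerProductSpace 𝕜 B]
    [NormedAddCommGroup C] [InnerProductSpace 𝕜 C]
    {f : A →ₗ[𝕜] B} {g : B →ₗ[𝕜] C} {f' : B →ₗ[𝕜] A} {g' : C →ₗ[𝕜] B}
    (hf : ∀ x y, inner 𝕜 (f x) y = inner 𝕜 x (f' y))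
    (hg : ∀ x y, inner 𝕜 (g x) y = inner 𝕜 x (g' y)) (hgf : g ∘ₗ f = 0) :
    f' ∘ₗ g' = 0 := by
  ext z
  rw [LinearMap.comp_apply, LinearMap.zero_apply, ← inner_self_eq_zero (𝕜 := 𝕜), ← hf, ← hg,
    ← LinearMap.comp_apply g f, hgf, LinearMap.zero_apply, inner_zero_left]

theorem LinearMap.map_mem_ker_sub_smul_id_of_comp_eq {R M N : Type*} [CommRing R]
    [AddCommGroup M] [Module R M] [AddCommGroup N] [Module R N]
    {f : M →ₗ[R] N} {A : End R M} {B : End R N} (hf : f ∘ₗ A = B ∘ₗ f) (μ : R) :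
    ∀ x ∈ LinearMap.ker (A - μ • LinearMap.id), f x ∈ LinearMap.ker (B - μ • LinearMap.id) := by
  intro x hx
  simp only [LinearMap.mem_ker, LinearMap.sub_apply, LinearMap.smul_apply, LinearMap.id_apply,
    sub_eq_zero] at hx ⊢
  rw [← LinearMap.comp_apply B f, ← hf, LinearMap.comp_apply, hx, map_smul]

theorem Module.End.eq_zero_of_mem_ker_sub_smul_id_of_eq_add_comp {R M P Q : Type*}
    [CommRing R] [IsDomain R] [AddCommGroup M] [Module R M] [IsTorsionFree R M]
    [AddCommGroup P] [Module R P] [AddCommGroup Q] [Module R Q]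
    {Δ : End R M} {a : P →ₗ[R] M} {b : M →ₗ[R] P} {c : Q →ₗ[R] M} {e : M →ₗ[R] Q}
    (hΔ : Δ = a ∘ₗ b + c ∘ₗ e) {μ : R} (hμ : μ ≠ 0) {x : M}
    (hx : x ∈ LinearMap.ker (Δ - μ • LinearMap.id)) (hb : b x = 0) (he : e x = 0) : x = 0 := by
  have hμx : μ • x = 0 := by simpa [hΔ, hb, he, sub_eq_zero, eq_comm (a := (0 : M))] using hx
  exact (smul_eq_zero_iff_right hμ).mp hμx

theorem finiteDimensional_and_finrank_le_add_of_injective_prod {K E A B : Type*} [DivisionRing K]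
    [AddCommGroup E] [Module K E] [AddCommGroup A] [Module K A] [AddCommGroup B] [Module K B]
    [FiniteDimensional K A] [FiniteDimensional K B] {f : E →ₗ[K] A} {g : E →ₗ[K] B}
    (h : Function.Injective (f.prod g)) :
    FiniteDimensional K E ∧ finrank K E ≤ finrank K A + finrank K B :=
  ⟨.of_injective _ h, finrank_prod (R := K) (M := A) (M' := B) ▸
    LinearMap.finrank_le_finrank_of_injective h⟩

section HodgeLaplacian

variable {R : Type*} [Semiring R] {V : ℤ → Type*} [∀ k, AddCommMonoid (V k)] [∀ k, Module R (V k)]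
  {d : ∀ k, V k →ₗ[R] V (k + 1)} {δ : ∀ k, V (k + 1) →ₗ[R] V k} {Δ : ∀ k, End R (V k)}

theorem codiff_comp_laplacian (hδδ : ∀ k, δ k ∘ₗ δ (k + 1) = 0)
    (hΔ : ∀ k, Δ (k + 1) = δ (k + 1) ∘ₗ d (k + 1) + d k ∘ₗ δ k) (k : ℤ) :
    δ (k + 1) ∘ₗ Δ (k + 1 + 1) = Δ (k + 1) ∘ₗ δ (k + 1) := by
  have hδδ' (k : ℤ) (y : V (k + 1 + 1)) : δ k (δ (k + 1) y) = 0 := LinearMap.congr_fun (hδδ k) y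
  ext x
  simp [hΔ, hδδ']

theorem diff_comp_laplacian (hdd : ∀ k, d (k + 1) ∘ₗ d k = 0)
    (hΔ : ∀ k, Δ (k + 1) = δ (k + 1) ∘ₗ d (k + 1) + d k ∘ₗ δ k) (k : ℤ) :
    d (k + 1) ∘ₗ Δ (k + 1) = Δ (k + 1 + 1) ∘ₗ d (k + 1) := by
  have hdd' (k : ℤ) (x : V k) : d (k + 1) (d k x) = 0 := LinearMap.congr_fun (hdd k) x
  ext x
  simp [hΔ, hdd']

end HodgeLaplacian

/-- For a complex `(V_k, d_k)` of inner product spaces with formal adjoints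
`δ_k` and Laplacians `Δ_k = δ_k ∘ d_k + d_{k-1} ∘ δ_{k-1}` (encoded by the
defining property `Δ_{k+1} = δ_{k+1} ∘ d_{k+1} + d_k ∘ δ_k` for all `k`):
if `λ ≠ 0` and the eigenspaces `E_λ(Δ_{k-1})` and `E_λ(Δ_{k+1})` are finite
dimensional, then `E_λ(Δ_k)` is finite dimensional and
`dim E_λ(Δ_k) ≤ dim E_λ(Δ_{k-1}) + dim E_λ(Δ_{k+1})`. -/
theorem eigenspace_dim_le_adjacent_sum
    (V : ℤ → Type*) [∀ k, NormedAddCommGroup (V k)] [∀ k, InnerProductSpace ℂ (V k)]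
    (d : ∀ k, V k →ₗ[ℂ] V (k + 1))
    (δ : ∀ k, V (k + 1) →ₗ[ℂ] V k)
    (hdd : ∀ k, d (k + 1) ∘ₗ d k = 0)
    (hadj : ∀ (k : ℤ) (x : V k) (y : V (k + 1)), (inner ℂ (d k x) y : ℂ) = inner ℂ x (δ k y))
    (Δ : ∀ k, V k →ₗ[ℂ] V k)
    (hΔ : ∀ k, Δ (k + 1) = δ (k + 1) ∘ₗ d (k + 1) + d k ∘ₗ δ k)
    (k : ℤ) (lam : ℂ) (hlam : lam ≠ 0)
    (h1 : FiniteDimensional ℂ (LinearMap.ker (Δ (k - 1) - lam • LinearMap.id)))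
    (h2 : FiniteDimensional ℂ (LinearMap.ker (Δ (k + 1) - lam • LinearMap.id))) :
    FiniteDimensional ℂ (LinearMap.ker (Δ k - lam • LinearMap.id)) ∧
    Module.finrank ℂ (LinearMap.ker (Δ k - lam • LinearMap.id)) ≤
      Module.finrank ℂ (LinearMap.ker (Δ (k - 1) - lam • LinearMap.id)) +
      Module.finrank ℂ (LinearMap.ker (Δ (k + 1) - lam • LinearMap.id)) := by
  -- `hΔ` only describes Laplacians at indices of the form `j + 1`
  obtain ⟨i, rfl⟩ : ∃ i, k = i + 1 + 1 := ⟨k - 1 - 1, by ring⟩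
  rw [show i + 1 + 1 - 1 = i + 1 by ring] at h1 ⊢
  have hδδ k : δ k ∘ₗ δ (k + 1) = 0 := formalAdjoint_comp_eq_zero (hadj k) (hadj (k + 1)) (hdd k)
  let δE := (δ (i + 1)).restrict
    (LinearMap.map_mem_ker_sub_smul_id_of_comp_eq (codiff_comp_laplacian hδδ hΔ i) lam)
  let dE := (d (i + 1 + 1)).restrict
    (LinearMap.map_mem_ker_sub_smul_id_of_comp_eq (diff_comp_laplacian hdd hΔ (i + 1)) lam)
  refine finiteDimensional_and_finrank_le_add_of_injective_prod (f := δE) (g := dE) ?_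
  rw [injective_iff_map_eq_zero]
  intro x hx
  obtain ⟨hδx, hdx⟩ := Prod.ext_iff.mp hx
  exact Subtype.ext <| eq_zero_of_mem_ker_sub_smul_id_of_eq_add_comp (hΔ (i + 1)) hlam x.2
    (congrArg Subtype.val hdx) (congrArg Subtype.val hδx)
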